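/- Fix real constants α_1, α_2, α_3 and define τ²(w) = α_1²(w_1 − w_2)(w_3 − w_1) + α_2²(w_2 − w_3)(w_1 − w_2) + α_3²(w_3 − w_1)(w_2 − w_3) for w = (w_1, w_2, w_3) ∈ ℝ³. Define the smooth vector fields on ℝ³: X_1^DBH(w) = (1, 1, 1), X_2^DBH(w) = (w_1, w_2, w_3), and X_3^DBH(w) = −F(w), where F(w) = (w_3 w_2 − w_1 w_3 − w_1 w_2 + τ²(w), w_1 w_3 − w_2 w_1 − w_2 w_3 + τ²(w), w_2 w_1 − w_3 w_2 − w_3 w_1 + τ²(w)) is the right-hand side of the generalized Darboux–Brioschi–Halphen system. Then [X_1^DBH, X_2^DBH] = X_1^DBH, [X_1^DBH, X_3^DBH] = 2 X_2^DBH, and [X_2^DBH, X_3^DBH] = X_3^DBH; hence the generalized Darboux–Brioschi–Halphen system dw/dt = F(w) is an sl(2,ℝ)-Lie system. -/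

import Mathlib

/-!
`X₁` is the constant field `(1,1,1)` and `X₂` the Euler field, so `[X₁, X] = DX(w)(1,1,1)` and
`[X₂, X] = DX(w)w − X(w)`. Since `τ²` only depends on differences of coordinates,
`F(w + t(1,1,1)) = F(w) − 2tw − t²(1,1,1)`, whence `DF(w)(1,1,1) = −2w`; since `F` is homogeneous
quadratic, `DF(w)w = 2F(w)`. Both derivatives are read off from the restriction of `F` to a line,
a quadratic polynomial in `t`.
-/

open VectorField

section
variable {𝕜 E F : Type*} [NontriviallyNormedField 𝕜] [NormedAddCommGroup E] [NormedSpace 𝕜 E]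
  [NormedAddCommGroup F] [NormedSpace 𝕜 F]

theorem fderiv_apply_eq_of_forall_add_smul {f : E → F} {x v : E} {a b : F}
    (hf : DifferentiableAt 𝕜 f x) (h : ∀ t : 𝕜, f (x + t • v) = f x + t • a + t ^ 2 • b) :
    fderiv 𝕜 f x v = a := by
  have hline : HasDerivAt (fun t : 𝕜 => f x + t • a + t ^ 2 • b) a 0 := by
    convert (((hasDerivAt_id (0 : 𝕜)).smul_const a).const_add (f x)).add
      ((hasDerivAt_pow 2 (0 : 𝕜)).smul_const b) using 1
    · rfl
    · simp
  rw [← hf.lineDeriv_eq_fderiv, lineDeriv, funext h, hline.deriv]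

theorem fderiv_apply_self_of_forall_smul_eq_sq_smul {f : E → F} {x : E}
    (hf : DifferentiableAt 𝕜 f x) (h : ∀ t : 𝕜, f (t • x) = t ^ 2 • f x) :
    fderiv 𝕜 f x x = (2 : 𝕜) • f x :=
  fderiv_apply_eq_of_forall_add_smul (b := f x) hf fun t => by
    rw [show x + t • x = (1 + t) • x by module, h]
    module

theorem lieBracket_const_left (c : E) (W : E → E) (x : E) :
    lieBracket 𝕜 (fun _ => c) W x = fderiv 𝕜 W x c := by
  simp [lieBracket_eq]

theorem lieBracket_id_left (W : E → E) (x : E) :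
    lieBracket 𝕜 (fun y => y) W x = fderiv 𝕜 W x x - W x := by
  simp [lieBracket_eq]
end

def dbhTauSq (a1 a2 a3 : ℝ) (w : Fin 3 → ℝ) : ℝ :=
  a1 ^ 2 * (w 0 - w 1) * (w 2 - w 0) + a2 ^ 2 * (w 1 - w 2) * (w 0 - w 1) +
    a3 ^ 2 * (w 2 - w 0) * (w 1 - w 2)

def dbhField (a1 a2 a3 : ℝ) (w : Fin 3 → ℝ) : Fin 3 → ℝ :=
  ![w 2 * w 1 - w 0 * w 2 - w 0 * w 1 + dbhTauSq a1 a2 a3 w,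
    w 0 * w 2 - w 1 * w 0 - w 1 * w 2 + dbhTauSq a1 a2 a3 w,
    w 1 * w 0 - w 2 * w 1 - w 2 * w 0 + dbhTauSq a1 a2 a3 w]

theorem dbhTauSq_add_smul_one (a1 a2 a3 t : ℝ) (w : Fin 3 → ℝ) :
    dbhTauSq a1 a2 a3 (w + t • ![1, 1, 1]) = dbhTauSq a1 a2 a3 w := by
  simp [dbhTauSq]

theorem dbhField_add_smul_one (a1 a2 a3 t : ℝ) (w : Fin 3 → ℝ) :
    dbhField a1 a2 a3 (w + t • ![1, 1, 1]) =
      dbhField a1 a2 a3 w + t • ((-2 : ℝ) • w) + t ^ 2 • -![1, 1, 1] := by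
  rw [dbhField, dbhTauSq_add_smul_one]
  ext i; fin_cases i <;> simp [dbhField, Matrix.vecHead, Matrix.vecTail] <;> ring

theorem dbhField_smul (a1 a2 a3 t : ℝ) (w : Fin 3 → ℝ) :
    dbhField a1 a2 a3 (t • w) = t ^ 2 • dbhField a1 a2 a3 w := by
  ext i; fin_cases i <;> simp [dbhField, dbhTauSq] <;> ring

theorem differentiable_dbhField (a1 a2 a3 : ℝ) : Differentiable ℝ (dbhField a1 a2 a3) := by
  refine differentiable_pi.2 fun i => ?_
  fin_cases i <;> simp [dbhField, dbhTauSq] <;> fun_prop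

theorem fderiv_dbhField_one (a1 a2 a3 : ℝ) (x : Fin 3 → ℝ) :
    fderiv ℝ (dbhField a1 a2 a3) x ![1, 1, 1] = (-2 : ℝ) • x :=
  fderiv_apply_eq_of_forall_add_smul (differentiable_dbhField a1 a2 a3 x)
    (dbhField_add_smul_one a1 a2 a3 · x)

theorem fderiv_dbhField_self (a1 a2 a3 : ℝ) (x : Fin 3 → ℝ) :
    fderiv ℝ (dbhField a1 a2 a3) x x = (2 : ℝ) • dbhField a1 a2 a3 x :=
  fderiv_apply_self_of_forall_smul_eq_sq_smul (differentiable_dbhField a1 a2 a3 x)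
    (dbhField_smul a1 a2 a3 · x)

/-- The vector fields `X₁ = Σ ∂/∂wᵢ`, `X₂ = Σ wᵢ ∂/∂wᵢ` and `X₃ = −F`,
where `F` is the right-hand side of the generalized Darboux--Brioschi--Halphen system,
satisfy the `sl(2,ℝ)` commutation relations; hence the generalized DBH system `dw/dt = F(w)`
is an `sl(2,ℝ)`-Lie system. -/
theorem dbh_sl2 (a1 a2 a3 : ℝ)
    (τsq : (Fin 3 → ℝ) → ℝ)
    (hτ : τsq = fun w => a1 ^ 2 * (w 0 - w 1) * (w 2 - w 0) +
      a2 ^ 2 * (w 1 - w 2) * (w 0 - w 1) + a3 ^ 2 * (w 2 - w 0) * (w 1 - w 2))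
    (F : (Fin 3 → ℝ) → Fin 3 → ℝ)
    (hF : F = fun w => ![w 2 * w 1 - w 0 * w 2 - w 0 * w 1 + τsq w,
      w 0 * w 2 - w 1 * w 0 - w 1 * w 2 + τsq w,
      w 1 * w 0 - w 2 * w 1 - w 2 * w 0 + τsq w])
    (X1 X2 X3 : (Fin 3 → ℝ) → Fin 3 → ℝ)
    (h1 : X1 = fun _ => ![1, 1, 1])
    (h2 : X2 = fun w => w)
    (h3 : X3 = -F) :
    lieBracket ℝ X1 X2 = X1 ∧
    (lieBracket ℝ X1 X3 = fun w => (2 : ℝ) • X2 w) ∧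
    lieBracket ℝ X2 X3 = X3 ∧
    F ∈ Submodule.span ℝ ({X1, X2, X3} : Set ((Fin 3 → ℝ) → Fin 3 → ℝ)) := by
  obtain rfl : F = dbhField a1 a2 a3 := by rw [hF, hτ]; rfl
  subst h1 h2 h3
  refine ⟨?_, ?_, ?_, ?_⟩
  · ext1 x
    simp [lieBracket_const_left]
  · ext1 x
    rw [lieBracket_const_left, fderiv_neg, neg_apply, fderiv_dbhField_one,
      neg_smul, neg_neg]
  · ext1 x
    rw [lieBracket_id_left, fderiv_neg, neg_apply, Pi.neg_apply, fderiv_dbhField_self]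
    module
  · rw [← neg_neg (dbhField a1 a2 a3)]
    exact neg_mem (Submodule.subset_span (by simp))
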